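/- arXiv:math/0702424 — 2 statements merged into one kernel-verified Lean document; each statement's English description precedes it below -/
import Mathlib

section
/- Let U, V be subspaces of E with dim U ≤ dim V and U ∩ V⊥ = 0 (i.e., V intersects U⊥ transversally). Set T := V ∩ U⊥, W := U + T, and let S := P_V(U) be the image of U under the orthogonal projection onto V. Then S = T⊥ ∩ V, dim U = dim S, dim W = dim V, and δ(W,V) = δ(U,V) = δ(U,S). -/
/-!
Inside `V`, the orthogonal complement of the shadow `S = P_V(U)` is `T = V ∩ U⊥`, because
`P_V` is self-adjoint and fixes `V`; hence `S = T⊥ ∩ V` and `V = S ⊕ T`. Transversality makes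
`P_V` injective on `U`, so `dim S = dim U` and `dim (U ⊕ T) = dim S + dim T = dim V`.
For the gaps: `P_W = P_U + P_T` with `P_V P_T = P_T`, and `P_V P_U = P_S P_U` since `P_V P_U`
already lands in `S ⊆ V`.
-/

open Module Submodule

noncomputable section

variable {E : Type*} [NormedAddCommGroup E] [InnerProductSpace ℝ E] [FiniteDimensional ℝ E]

/-- The orthogonal projection onto a subspace `U`, viewed as a continuous linear
endomorphism of `E`. -/
noncomputable def projCLM (U : Submodule ℝ E) : E →L[ℝ] E :=
  U.subtypeL.comp (orthogonalProjection U)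

/-- The gap `δ(U,V) := ‖P_U - P_V ∘ P_U‖` between two subspaces. -/
noncomputable def gap (U V : Submodule ℝ E) : ℝ :=
  ‖projCLM U - (projCLM V).comp (projCLM U)‖

namespace Submodule

variable {𝕜 F : Type*} [RCLike 𝕜] [NormedAddCommGroup F] [InnerProductSpace 𝕜 F]

lemma orthogonal_inf_orthogonal_inf_of_le {K V : Submodule 𝕜 F} [K.HasOrthogonalProjection]
    (h : K ≤ V) : (Kᗮ ⊓ V)ᗮ ⊓ V = K := by
  have hK : K ≤ (Kᗮ ⊓ V)ᗮ := K.le_orthogonal_orthogonal.trans (orthogonal_le inf_le_left)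
  calc (Kᗮ ⊓ V)ᗮ ⊓ V = (K ⊔ Kᗮ ⊓ V) ⊓ (Kᗮ ⊓ V)ᗮ := by
        rw [sup_orthogonal_inf_of_hasOrthogonalProjection h, inf_comm]
    _ = K := by rw [sup_inf_assoc_of_le _ hK, inf_orthogonal_eq_bot, sup_bot_eq]

lemma map_starProjection_le (U V : Submodule 𝕜 F) [V.HasOrthogonalProjection] :
    U.map (V.starProjection : F →ₗ[𝕜] F) ≤ V := by
  rintro _ ⟨u, -, rfl⟩
  exact V.starProjection_apply_mem u

lemma orthogonal_map_starProjection_inf (U V : Submodule 𝕜 F) [V.HasOrthogonalProjection] :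
    (U.map (V.starProjection : F →ₗ[𝕜] F))ᗮ ⊓ V = V ⊓ Uᗮ := by
  ext x
  simp only [mem_inf, mem_orthogonal, mem_map, forall_exists_index, and_imp,
    forall_apply_eq_imp_iff₂]
  rw [and_comm]
  refine and_congr_right fun hx => forall₂_congr fun u _ => ?_
  rw [ContinuousLinearMap.coe_coe, inner_starProjection_left_eq_right,
    starProjection_eq_self_iff.mpr hx]

theorem map_starProjection_eq_orthogonal_inf [FiniteDimensional 𝕜 F] (U V : Submodule 𝕜 F) :
    U.map (V.starProjection : F →ₗ[𝕜] F) = (V ⊓ Uᗮ)ᗮ ⊓ V := by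
  rw [← orthogonal_map_starProjection_inf,
    orthogonal_inf_orthogonal_inf_of_le (map_starProjection_le U V)]

lemma finrank_map_starProjection {U V : Submodule 𝕜 F} [V.HasOrthogonalProjection]
    [FiniteDimensional 𝕜 U] (h : U ⊓ Vᗮ = ⊥) :
    finrank 𝕜 (U.map (V.starProjection : F →ₗ[𝕜] F)) = finrank 𝕜 U := by
  rw [← LinearMap.range_domRestrict, LinearMap.finrank_range_of_inj]
  rw [LinearMap.injective_domRestrict_iff, disjoint_iff]
  exact (ker_starProjection V).symm ▸ h

theorem finrank_sup_inf_orthogonal [FiniteDimensional 𝕜 F] {U V : Submodule 𝕜 F}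
    (h : U ⊓ Vᗮ = ⊥) : finrank 𝕜 ↥(U ⊔ V ⊓ Uᗮ) = finrank 𝕜 V := by
  have hW := finrank_sup_add_finrank_inf_eq U (V ⊓ Uᗮ)
  rw [(U.orthogonal_disjoint.mono_right inf_le_right).eq_bot, finrank_bot, add_zero] at hW
  have hV := finrank_add_inf_finrank_orthogonal (inf_le_left : V ⊓ Uᗮ ≤ V)
  rw [← map_starProjection_eq_orthogonal_inf, finrank_map_starProjection h] at hV
  lia

lemma starProjection_sup_of_isOrtho {U T : Submodule 𝕜 F} [U.HasOrthogonalProjection]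
    [T.HasOrthogonalProjection] [(U ⊔ T).HasOrthogonalProjection] (h : U ⟂ T) :
    (U ⊔ T).starProjection = U.starProjection + T.starProjection := by
  ext x
  refine eq_starProjection_of_mem_orthogonal
    (add_mem (mem_sup_left (U.starProjection_apply_mem x))
      (mem_sup_right (T.starProjection_apply_mem x))) ?_
  rw [add_apply, ← inf_orthogonal]
  constructor
  · rw [← sub_sub]
    exact sub_mem (sub_starProjection_mem_orthogonal x) (h.symm (T.starProjection_apply_mem x))
  · rw [add_comm, ← sub_sub]
    exact sub_mem (sub_starProjection_mem_orthogonal x) (h (U.starProjection_apply_mem x))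

lemma starProjection_comp_starProjection_of_ge {T V : Submodule 𝕜 F}
    [T.HasOrthogonalProjection] [V.HasOrthogonalProjection] (h : T ≤ V) :
    V.starProjection ∘L T.starProjection = T.starProjection := by
  ext x
  exact starProjection_eq_self_iff.mpr (h (T.starProjection_apply_mem x))

lemma starProjection_eq_of_le_of_mem {S V : Submodule 𝕜 F} [S.HasOrthogonalProjection]
    [V.HasOrthogonalProjection] (h : S ≤ V) {x : F} (hx : V.starProjection x ∈ S) :
    S.starProjection x = V.starProjection x :=
  eq_starProjection_of_mem_orthogonal hx (orthogonal_le h (sub_starProjection_mem_orthogonal x))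

end Submodule

lemma projCLM_eq_starProjection (U : Submodule ℝ E) : projCLM U = U.starProjection := rfl

lemma gap_sup_of_isOrtho_of_le {U T V : Submodule ℝ E} (hUT : U ⟂ T) (hTV : T ≤ V) :
    gap (U ⊔ T) V = gap U V := by
  simp only [gap, projCLM_eq_starProjection, starProjection_sup_of_isOrtho hUT,
    ContinuousLinearMap.comp_add, starProjection_comp_starProjection_of_ge hTV]
  congr 1
  abel

lemma gap_eq_gap_of_le_of_map_le {U S V : Submodule ℝ E} (hSV : S ≤ V)
    (hUS : U.map (projCLM V : E →ₗ[ℝ] E) ≤ S) : gap U S = gap U V := by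
  simp only [gap]
  congr 2
  ext x
  exact starProjection_eq_of_le_of_mem hSV (hUS (mem_map_of_mem (U.starProjection_apply_mem x)))

theorem shadow_properties_general (U V : Submodule ℝ E)
    (htrans : U ⊓ Vᗮ = ⊥) :
    Submodule.map (projCLM V : E →ₗ[ℝ] E) U = (V ⊓ Uᗮ)ᗮ ⊓ V ∧
      finrank ℝ U = finrank ℝ ↥(Submodule.map (projCLM V : E →ₗ[ℝ] E) U) ∧
      finrank ℝ ↥(U ⊔ (V ⊓ Uᗮ)) = finrank ℝ V ∧
      gap (U ⊔ (V ⊓ Uᗮ)) V = gap U V ∧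
      gap U V = gap U (Submodule.map (projCLM V : E →ₗ[ℝ] E) U) :=
  ⟨map_starProjection_eq_orthogonal_inf U V, (finrank_map_starProjection htrans).symm,
    finrank_sup_inf_orthogonal htrans,
    gap_sup_of_isOrtho_of_le ((isOrtho_orthogonal_right U).mono_right inf_le_right) inf_le_left,
    (gap_eq_gap_of_le_of_map_le (map_starProjection_le U V) le_rfl).symm⟩

/-- Let `U, V` be subspaces with `dim U ≤ dim V` and `U ∩ V⊥ = 0`.  Set `T := V ∩ U⊥`,
`W := U + T`, and let `S := P_V(U)` be the shadow of `U` on `V`.  Then `S = T⊥ ∩ V`,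
`dim U = dim S`, `dim W = dim V`, and `δ(W,V) = δ(U,V) = δ(U,S)`. -/
theorem shadow_properties (U V : Submodule ℝ E)
    (hdim : finrank ℝ U ≤ finrank ℝ V) (htrans : U ⊓ Vᗮ = ⊥) :
    Submodule.map (projCLM V : E →ₗ[ℝ] E) U = (V ⊓ Uᗮ)ᗮ ⊓ V ∧
      finrank ℝ U = finrank ℝ ↥(Submodule.map (projCLM V : E →ₗ[ℝ] E) U) ∧
      finrank ℝ ↥(U ⊔ (V ⊓ Uᗮ)) = finrank ℝ V ∧
      gap (U ⊔ (V ⊓ Uᗮ)) V = gap U V ∧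
      gap U V = gap U (Submodule.map (projCLM V : E →ₗ[ℝ] E) U) :=
  shadow_properties_general U V htrans
end
end

section
/- There exists a constant C > 1, depending only on the dimension of E, such that for every pair of subspaces U, V ⊆ E with dim U ≤ dim V and U ∩ V⊥ = 0, with slope M : U → U⊥ (the unique linear map with P_V(U) = { u + M u : u ∈ U }), one has (1/C) ‖M‖ (1 + ‖M‖²)^{−1/2} ≤ δ(U,V) ≤ C ‖M‖ (1 + ‖M‖²)^{−1/2}. -/
/-!
A vector `u ∈ U` and its image `u + M u` in `V` span a plane in which the distance from `u` to the
line through `u + M u` is `‖M u‖ ‖u‖ / √(‖u‖² + ‖M u‖²)`; this gives `δ(U,V) ≤ ‖M‖ / √(1 + ‖M‖²)`.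
Conversely `P_V u = w + M w` for some `w ∈ U`, and both orthogonal components `u - w ∈ U` and
`M w ∈ Uᗮ` of `u - P_V u` are at most `‖u - P_V u‖ ≤ δ ‖u‖`, so `‖M u‖ ≤ ‖M (u - w)‖ + ‖M w‖`
gives `‖M‖ ≤ (1 + ‖M‖) δ`. Since `1 + ‖M‖ ≤ 2 √(1 + ‖M‖²)`, the constant `C = 2` works in every
dimension.
-/

open Module Submodule

noncomputable section

variable {E : Type*} [NormedAddCommGroup E] [InnerProductSpace ℝ E] [FiniteDimensional ℝ E]

open scoped RealInnerProductSpace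

section InnerProductSpace

variable {F : Type*} [NormedAddCommGroup F] [InnerProductSpace ℝ F]

lemma norm_sub_starProjection_le (K : Submodule ℝ F) [K.HasOrthogonalProjection] (x : F)
    {v : F} (hv : v ∈ K) : ‖x - K.starProjection x‖ ≤ ‖x - v‖ := by
  rw [starProjection_minimal]
  exact ciInf_le ⟨0, by rintro _ ⟨y, rfl⟩; exact norm_nonneg _⟩ (⟨v, hv⟩ : K)

lemma norm_le_norm_sub_of_inner_eq_zero {x y : F} (h : ⟪x, y⟫ = 0) :
    ‖x‖ ≤ ‖x - y‖ ∧ ‖y‖ ≤ ‖x - y‖ := by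
  have hpyth := norm_sub_sq_eq_norm_sq_add_norm_sq_real h
  constructor <;>
  · refine (pow_le_pow_iff_left₀ (norm_nonneg _) (norm_nonneg _) two_ne_zero).1 ?_
    nlinarith [sq_nonneg ‖x‖, sq_nonneg ‖y‖]

/-- `(1 + a²)⁻¹ • (u + m)` is the closest point to `u` on the line through `u + m`
when `‖m‖ = a ‖u‖`. -/
lemma norm_sub_smul_add_le {u m : F} (horth : ⟪u, m⟫ = 0) {a : ℝ} (ha : 0 ≤ a)
    (hm : ‖m‖ ≤ a * ‖u‖) : ‖u - (1 + a ^ 2)⁻¹ • (u + m)‖ ≤ a / √(1 + a ^ 2) * ‖u‖ := by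
  set c := (1 + a ^ 2)⁻¹ with hc
  have hpos : 0 < 1 + a ^ 2 := by positivity
  have hdecomp : u - c • (u + m) = (1 - c) • u - c • m := by module
  have horth' : ⟪(1 - c) • u, c • m⟫ = 0 := by
    simp [real_inner_smul_left, real_inner_smul_right, horth]
  have hsq : ‖u - c • (u + m)‖ ^ 2 ≤ (a / √(1 + a ^ 2) * ‖u‖) ^ 2 := by
    rw [hdecomp, norm_sub_sq_real, horth', mul_zero, sub_zero, norm_smul, norm_smul,
      Real.norm_eq_abs, Real.norm_eq_abs, mul_pow, mul_pow, sq_abs, sq_abs, mul_pow, div_pow,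
      Real.sq_sqrt hpos.le]
    have hm2 : ‖m‖ ^ 2 ≤ a ^ 2 * ‖u‖ ^ 2 := by
      rw [← mul_pow]; exact pow_le_pow_left₀ (norm_nonneg m) hm 2
    calc (1 - c) ^ 2 * ‖u‖ ^ 2 + c ^ 2 * ‖m‖ ^ 2
        ≤ (1 - c) ^ 2 * ‖u‖ ^ 2 + c ^ 2 * (a ^ 2 * ‖u‖ ^ 2) := by gcongr
      _ = a ^ 2 / (1 + a ^ 2) * ‖u‖ ^ 2 := by rw [hc]; field_simp; ring
  exact (pow_le_pow_iff_left₀ (norm_nonneg _) (by positivity) two_ne_zero).1 hsq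

end InnerProductSpace

lemma norm_sub_projCLM_le_gap_mul {U : Submodule ℝ E} (V : Submodule ℝ E) {u : E} (hu : u ∈ U) :
    ‖u - projCLM V u‖ ≤ gap U V * ‖u‖ := by
  have hPu : projCLM U u = u := starProjection_eq_self_iff.2 hu
  simpa [gap, hPu] using (projCLM U - (projCLM V).comp (projCLM U)).le_opNorm u

lemma gap_le_of_forall_norm_sub_le {U V : Submodule ℝ E} {K : ℝ} (hK : 0 ≤ K)
    (h : ∀ u ∈ U, ‖u - projCLM V u‖ ≤ K * ‖u‖) : gap U V ≤ K := by
  refine ContinuousLinearMap.opNorm_le_bound _ hK fun x => ?_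
  calc ‖projCLM U x - projCLM V (projCLM U x)‖ ≤ K * ‖projCLM U x‖ :=
        h _ (U.starProjection_apply_mem x)
    _ ≤ K * ‖x‖ := by gcongr; exact U.norm_starProjection_apply_le x

/-- `M : U → Uᗮ` is the slope of `V` over `U`: `P_V(U)` is the graph `{u + M u : u ∈ U}`. -/
def IsSlope (U V : Submodule ℝ E) (M : ↥U →L[ℝ] ↥Uᗮ) : Prop :=
  Submodule.map (projCLM V : E →ₗ[ℝ] E) U =
    LinearMap.range ((U.subtypeL + Uᗮ.subtypeL.comp M : ↥U →L[ℝ] E) : ↥U →ₗ[ℝ] E)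

namespace IsSlope

variable {U V : Submodule ℝ E} {M : ↥U →L[ℝ] ↥Uᗮ}

lemma exists_projCLM_eq (h : IsSlope U V M) (u : U) : ∃ w : U, projCLM V u = w + M w := by
  have hmem : projCLM V u ∈ Submodule.map (projCLM V : E →ₗ[ℝ] E) U := ⟨u, u.2, rfl⟩
  rw [h] at hmem
  obtain ⟨w, hw⟩ := hmem
  exact ⟨w, hw.symm⟩

lemma add_mem (h : IsSlope U V M) (u : U) : (u : E) + M u ∈ V := by
  have hmem : (u : E) + M u ∈ Submodule.map (projCLM V : E →ₗ[ℝ] E) U := by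
    rw [h]; exact ⟨u, rfl⟩
  obtain ⟨x, -, hx⟩ := hmem
  rw [← hx]
  exact V.starProjection_apply_mem x

lemma gap_le (h : IsSlope U V M) : gap U V ≤ ‖M‖ / √(1 + ‖M‖ ^ 2) := by
  refine gap_le_of_forall_norm_sub_le (by positivity) fun x hx => ?_
  set u : U := ⟨x, hx⟩
  have hMu : ‖(M u : E)‖ ≤ ‖M‖ * ‖(u : E)‖ := M.le_opNorm u
  calc ‖x - projCLM V x‖ ≤ ‖(u : E) - (1 + ‖M‖ ^ 2)⁻¹ • ((u : E) + M u)‖ :=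
        norm_sub_starProjection_le V x (V.smul_mem _ (h.add_mem u))
    _ ≤ ‖M‖ / √(1 + ‖M‖ ^ 2) * ‖x‖ :=
        norm_sub_smul_add_le ((M u).2 _ u.2) (norm_nonneg M) hMu

lemma norm_le_one_add_mul_gap (h : IsSlope U V M) : ‖M‖ ≤ (1 + ‖M‖) * gap U V := by
  have hgap : 0 ≤ gap U V := norm_nonneg _
  refine M.opNorm_le_bound (by positivity) fun u => ?_
  obtain ⟨w, hw⟩ := h.exists_projCLM_eq u
  set d := ‖(u : E) - projCLM V u‖
  have hd : d ≤ gap U V * ‖u‖ := norm_sub_projCLM_le_gap_mul V u.2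
  have hdecomp : (u : E) - projCLM V u = ((u - w : U) : E) - M w := by
    rw [hw, Submodule.coe_sub]; abel
  obtain ⟨huw, hMw⟩ := norm_le_norm_sub_of_inner_eq_zero ((M w).2 _ (u - w).2)
  rw [← hdecomp] at huw hMw
  calc ‖M u‖ = ‖M (u - w) + M w‖ := by rw [← map_add, sub_add_cancel]
    _ ≤ ‖M (u - w)‖ + ‖M w‖ := norm_add_le _ _
    _ ≤ ‖M‖ * d + d := add_le_add ((M.le_opNorm _).trans (by gcongr; exact huw)) hMw
    _ = (1 + ‖M‖) * d := by ring
    _ ≤ (1 + ‖M‖) * gap U V * ‖u‖ := by rw [mul_assoc]; gcongr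

end IsSlope

lemma one_add_le_two_mul_sqrt_one_add_sq (a : ℝ) : 1 + a ≤ 2 * √(1 + a ^ 2) := by
  have hs := Real.sq_sqrt (show 0 ≤ 1 + a ^ 2 by positivity)
  refine le_trans (le_abs_self _) (abs_le_of_sq_le_sq ?_ (by positivity))
  nlinarith [sq_nonneg (a - 1)]

/-- There exists a constant `C > 1`, depending only on `dim E`, such that for every pair of
subspaces `U, V ⊆ E` with `dim U ≤ dim V` and `U ∩ V⊥ = 0`, with slope `M : U → U⊥`
(the unique linear map with `P_V(U) = {u + Mu : u ∈ U}`),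
`(1/C) ‖M‖ (1+‖M‖²)^{-1/2} ≤ δ(U,V) ≤ C ‖M‖ (1+‖M‖²)^{-1/2}`. -/
theorem gap_comparable_slope (n : ℕ) :
    ∃ C : ℝ, 1 < C ∧
      ∀ (E : Type*) [NormedAddCommGroup E] [InnerProductSpace ℝ E] [FiniteDimensional ℝ E],
        finrank ℝ E = n →
        ∀ (U V : Submodule ℝ E) (M : ↥U →L[ℝ] ↥Uᗮ),
          finrank ℝ U ≤ finrank ℝ V → U ⊓ Vᗮ = ⊥ →
          Submodule.map (projCLM V : E →ₗ[ℝ] E) U = LinearMap.range ((U.subtypeL + Uᗮ.subtypeL.comp M : ↥U →L[ℝ] E) : ↥U →ₗ[ℝ] E) →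
          (1 / C) * (‖M‖ / Real.sqrt (1 + ‖M‖ ^ 2)) ≤ gap U V ∧
            gap U V ≤ C * (‖M‖ / Real.sqrt (1 + ‖M‖ ^ 2)) := by
  refine ⟨2, one_lt_two, fun E _ _ _ _ U V M _ _ hslope => ?_⟩
  have h : IsSlope U V M := hslope
  have hs : 0 < √(1 + ‖M‖ ^ 2) := by positivity
  have hratio : 0 ≤ ‖M‖ / √(1 + ‖M‖ ^ 2) := by positivity
  constructor
  · have hlower : ‖M‖ / √(1 + ‖M‖ ^ 2) ≤ 2 * gap U V := by
      rw [div_le_iff₀ hs]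
      calc ‖M‖ ≤ (1 + ‖M‖) * gap U V := h.norm_le_one_add_mul_gap
        _ ≤ 2 * √(1 + ‖M‖ ^ 2) * gap U V :=
          mul_le_mul_of_nonneg_right (one_add_le_two_mul_sqrt_one_add_sq _) (norm_nonneg _)
        _ = 2 * gap U V * √(1 + ‖M‖ ^ 2) := by ring
    linarith
  · linarith [h.gap_le]
end
end
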